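/- Let G and H be connected finite simple graphs of order n₁ ≥ 2 and n₂ ≥ 2, with maximum degrees Δ₁ and Δ₂, respectively. If Δ₁ ≠ n₁ − 1 or Δ₂ ≠ n₂ − 1, then dim_s(G + H) = n₁ + n₂ − ϖ(G) − ϖ(H), and moreover dim_s(G + H) ≥ dim_s(G) + dim_s(H). -/

import Mathlib

open SimpleGraph

/-- A vertex `w` strongly resolves the pair `u`, `v` if `v` lies on some shortest `u`–`w`
path or `u` lies on some shortest `v`–`w` path. -/
def StronglyResolves {V : Type*} (G : SimpleGraph V) (w u v : V) : Prop :=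
  G.dist u w = G.dist u v + G.dist v w ∨ G.dist v w = G.dist v u + G.dist u w

/-- `S` is a strong resolving set for `G` if every pair of distinct vertices is strongly
resolved by some vertex of `S`. -/
def IsStrongResolvingSet {V : Type*} (G : SimpleGraph V) (S : Set V) : Prop :=
  ∀ u v : V, u ≠ v → ∃ w ∈ S, StronglyResolves G w u v

/-- The strong metric dimension: the minimum cardinality of a strong resolving set. -/
noncomputable def strongDim {V : Type*} (G : SimpleGraph V) [Fintype V] : ℕ :=
  sInf {k | ∃ S : Finset V, IsStrongResolvingSet G ↑S ∧ S.card = k}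

/-- The closed neighborhood of a vertex. -/
def closedNbhd {V : Type*} (G : SimpleGraph V) (v : V) : Set V :=
  insert v (G.neighborSet v)

/-- A twin-free clique: a clique containing no pair of true twins. -/
def IsTwinFreeClique {V : Type*} (G : SimpleGraph V) (X : Finset V) : Prop :=
  G.IsClique ↑X ∧ ∀ u ∈ X, ∀ v ∈ X, u ≠ v → closedNbhd G u ≠ closedNbhd G v

/-- The twin-free clique number: maximum cardinality of a twin-free clique. -/
noncomputable def twinFreeCliqueNum {V : Type*} (G : SimpleGraph V) [Fintype V] : ℕ :=
  sSup {k | ∃ X : Finset V, IsTwinFreeClique G X ∧ X.card = k}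

/-- Adjacency relation of the join of two graphs. -/
def joinAdj {V W : Type*} (G : SimpleGraph V) (H : SimpleGraph W) :
    V ⊕ W → V ⊕ W → Prop
  | Sum.inl a, Sum.inl b => G.Adj a b
  | Sum.inr a, Sum.inr b => H.Adj a b
  | Sum.inl _, Sum.inr _ => True
  | Sum.inr _, Sum.inl _ => True

/-- The join `G + H`: disjoint union of `G` and `H` plus all edges between them. -/
def joinGraph {V W : Type*} (G : SimpleGraph V) (H : SimpleGraph W) :
    SimpleGraph (V ⊕ W) where
  Adj := joinAdj G H
  symm := by
    constructor
    rintro (a | a) (b | b) h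
    · exact G.adj_symm h
    · trivial
    · trivial
    · exact H.adj_symm h
  loopless := by
    constructor
    rintro (a | a) h
    · exact G.loopless.1 a h
    · exact H.loopless.1 a h

/-- Adjacency relation of the corona product `G ⊙ H`. -/
def coronaAdj {V W : Type*} (G : SimpleGraph V) (H : SimpleGraph W) :
    V ⊕ V × W → V ⊕ V × W → Prop
  | Sum.inl a, Sum.inl b => G.Adj a b
  | Sum.inr p, Sum.inr q => p.1 = q.1 ∧ H.Adj p.2 q.2
  | Sum.inl a, Sum.inr q => a = q.1
  | Sum.inr p, Sum.inl b => p.1 = b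

/-- The corona product `G ⊙ H`: one copy of `G` and one copy of `H` for each vertex of
`G`, with the `i`-th vertex of `G` joined to every vertex of the `i`-th copy of `H`. -/
def corona {V W : Type*} (G : SimpleGraph V) (H : SimpleGraph W) :
    SimpleGraph (V ⊕ V × W) where
  Adj := coronaAdj G H
  symm := by
    constructor
    rintro (a | p) (b | q) h
    · exact G.adj_symm h
    · exact h.symm
    · exact h.symm
    · exact ⟨h.1.symm, H.adj_symm h.2⟩
  loopless := by
    constructor
    rintro (a | p) h
    · exact G.loopless.1 a h
    · exact H.loopless.1 p.2 h.2

/-- The disjoint union of copies of `H`, one copy for each element of `V`. -/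
def copies (V : Type*) {W : Type*} (H : SimpleGraph W) : SimpleGraph (V × W) where
  Adj p q := p.1 = q.1 ∧ H.Adj p.2 q.2
  symm := ⟨fun _ _ h => ⟨h.1.symm, h.2.symm⟩⟩
  loopless := ⟨fun p h => H.loopless.1 p.2 h.2⟩

/-- The algebraic connectivity: the second smallest eigenvalue (with multiplicity,
in nondecreasing order) of the Laplacian matrix. -/
noncomputable def algebraicConnectivity {V : Type*} (G : SimpleGraph V) [Fintype V]
    [DecidableEq V] [DecidableRel G.Adj] : ℝ :=
  (((Finset.univ.val.map ((G.posSemidef_lapMatrix ℝ).isHermitian.eigenvalues)).sort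
    (· ≤ ·)).getD 1 0)

/-!
In a connected graph the complement of a twin-free clique `X` is a strong resolving set: two
vertices of `X` are adjacent and not twins, so some vertex is adjacent to exactly one of them; it
lies outside the clique `X` and is at distance `1` from one and `2` from the other. Hence
`dim_s ≤ n - ϖ`. If the diameter is at most two, a vertex `w ∉ {u, v}` can only resolve `u, v`
when `u ~ v` and `d(u, w) ≠ d(v, w)`, so the vertices missed by a strong resolving set form a
twin-free clique, and `dim_s = n - ϖ`.

The join has diameter two. A vertex of `G` and a vertex of `H` with the same closed neighbourhood
in `G + H` would both be universal, i.e. of degree `n₁ - 1` and `n₂ - 1`. Excluding this, the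
twin-free cliques of `G + H` are exactly the unions of twin-free cliques of `G` and of `H`, so
`ϖ(G + H) = ϖ(G) + ϖ(H)`, and the inequality is `dim_s ≤ n - ϖ` for `G` and for `H`.
-/

open SimpleGraph

section General

variable {V : Type*} {G : SimpleGraph V} {u v w : V}

@[simp]
lemma mem_closedNbhd : w ∈ closedNbhd G v ↔ w = v ∨ G.Adj v w :=
  Iff.rfl

lemma closedNbhd_eq_iff_of_adj (h : G.Adj u v) :
    closedNbhd G u = closedNbhd G v ↔ ∀ w, w ≠ u → w ≠ v → (G.Adj u w ↔ G.Adj v w) := by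
  simp only [Set.ext_iff, mem_closedNbhd]
  refine ⟨fun hN w hu hv => by simpa [hu, hv] using hN w, fun hN w => ?_⟩
  by_cases hu : w = u
  · simp [hu, h.symm]
  by_cases hv : w = v
  · simp [hv, h]
  simp [hu, hv, hN w hu hv]

lemma StronglyResolves.symm (h : StronglyResolves G w u v) : StronglyResolves G w v u :=
  Or.symm h

lemma stronglyResolves_self_left (u v : V) : StronglyResolves G u u v :=
  Or.inr (by simp)

lemma SimpleGraph.Connected.dist_eq_two_of_not_adj (hG : G.Connected) (hne : u ≠ v)
    (hadj : ¬ G.Adj u v) (hle : G.dist u v ≤ 2) : G.dist u v = 2 := by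
  have := hG.pos_dist_of_ne hne
  have : G.dist u v ≠ 1 := fun h => hadj (dist_eq_one_iff_adj.mp h)
  omega

lemma stronglyResolves_of_adj_of_not_adj (hG : G.Connected) (huv : G.Adj u v)
    (huw : G.Adj u w) (hvw : ¬ G.Adj v w) (hne : v ≠ w) : StronglyResolves G w u v := by
  have hvu : G.dist v u = 1 := dist_eq_one_iff_adj.mpr huv.symm
  have huw : G.dist u w = 1 := dist_eq_one_iff_adj.mpr huw
  have hle : G.dist v w ≤ 2 := hG.dist_triangle.trans (by rw [hvu, huw])
  right
  rw [hG.dist_eq_two_of_not_adj hne hvw hle, hvu, huw]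

section DiameterTwo

variable (hG : G.Connected) (hdiam : ∀ x y, G.dist x y ≤ 2)
include hG hdiam

lemma StronglyResolves.adj_and_dist_ne (h : StronglyResolves G w u v) (hwu : w ≠ u)
    (hwv : w ≠ v) (huv : u ≠ v) : G.Adj u v ∧ G.dist u w ≠ G.dist v w := by
  have := hG.pos_dist_of_ne huv
  have := hG.pos_dist_of_ne hwu.symm
  have := hG.pos_dist_of_ne hwv.symm
  have := hdiam u w
  have := hdiam v w
  have : G.dist v u = G.dist u v := dist_comm
  have hd : G.dist u v = 1 := by rcases h with h | h <;> omega
  refine ⟨dist_eq_one_iff_adj.mp hd, ?_⟩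
  rcases h with h | h <;> omega

lemma dist_eq_of_closedNbhd_eq (h : closedNbhd G u = closedNbhd G v) (hwu : w ≠ u)
    (hwv : w ≠ v) : G.dist u w = G.dist v w := by
  have hiff : G.Adj u w ↔ G.Adj v w := by
    simpa [hwu, hwv] using Set.ext_iff.mp h w
  by_cases huw : G.Adj u w
  · rw [dist_eq_one_iff_adj.mpr huw, dist_eq_one_iff_adj.mpr (hiff.mp huw)]
  · rw [hG.dist_eq_two_of_not_adj hwu.symm huw (hdiam u w),
      hG.dist_eq_two_of_not_adj hwv.symm (hiff.not.mp huw) (hdiam v w)]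

end DiameterTwo

lemma isTwinFreeClique_empty : IsTwinFreeClique G ∅ :=
  ⟨by simp, by simp⟩

lemma IsTwinFreeClique.isStrongResolvingSet_compl [Fintype V] [DecidableEq V]
    (hG : G.Connected) {X : Finset V} (hX : IsTwinFreeClique G X) :
    IsStrongResolvingSet G ↑Xᶜ := by
  intro u v huv
  by_cases hu : u ∈ X
  swap
  · exact ⟨u, by simpa using hu, stronglyResolves_self_left u v⟩
  by_cases hv : v ∈ X
  swap
  · exact ⟨v, by simpa using hv, (stronglyResolves_self_left v u).symm⟩
  have hadj : G.Adj u v := hX.1 hu hv huv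
  obtain ⟨w, hwu, hwv, hw⟩ : ∃ w, w ≠ u ∧ w ≠ v ∧ ¬ (G.Adj u w ↔ G.Adj v w) := by
    simpa using mt (closedNbhd_eq_iff_of_adj hadj).mpr (hX.2 u hu v hv huv)
  have hwX : w ∉ X := fun hwX =>
    hw (iff_of_true (hX.1 hu hwX hwu.symm) (hX.1 hv hwX hwv.symm))
  refine ⟨w, by simpa using hwX, ?_⟩
  by_cases huw : G.Adj u w
  · exact stronglyResolves_of_adj_of_not_adj hG hadj huw (hw <| iff_of_true huw ·) hwv.symm
  · exact (stronglyResolves_of_adj_of_not_adj hG hadj.symm (by tauto) huw hwu.symm).symm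

lemma IsStrongResolvingSet.isTwinFreeClique_compl [Fintype V] [DecidableEq V]
    (hG : G.Connected) (hdiam : ∀ x y, G.dist x y ≤ 2) {S : Finset V}
    (hS : IsStrongResolvingSet G ↑S) : IsTwinFreeClique G Sᶜ := by
  have key : ∀ u ∈ Sᶜ, ∀ v ∈ Sᶜ, u ≠ v → G.Adj u v ∧ closedNbhd G u ≠ closedNbhd G v := by
    intro u hu v hv huv
    obtain ⟨w, hwS, hw⟩ := hS u v huv
    have hwu : w ≠ u := by rintro rfl; simp_all
    have hwv : w ≠ v := by rintro rfl; simp_all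
    obtain ⟨hadj, hne⟩ := hw.adj_and_dist_ne hG hdiam hwu hwv huv
    exact ⟨hadj, fun h => hne (dist_eq_of_closedNbhd_eq hG hdiam h hwu hwv)⟩
  exact ⟨fun u hu v hv huv => (key u hu v hv huv).1, fun u hu v hv huv => (key u hu v hv huv).2⟩

section Card

variable [Fintype V]

lemma bddAbove_twinFreeClique_cards (G : SimpleGraph V) :
    BddAbove {k | ∃ X : Finset V, IsTwinFreeClique G X ∧ X.card = k} :=
  ⟨Fintype.card V, by rintro k ⟨X, -, rfl⟩; exact X.card_le_univ⟩

lemma IsTwinFreeClique.card_le_twinFreeCliqueNum {X : Finset V} (hX : IsTwinFreeClique G X) :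
    X.card ≤ twinFreeCliqueNum G :=
  le_csSup (bddAbove_twinFreeClique_cards G) ⟨X, hX, rfl⟩

lemma exists_isTwinFreeClique_card_eq (G : SimpleGraph V) :
    ∃ X : Finset V, IsTwinFreeClique G X ∧ X.card = twinFreeCliqueNum G :=
  Nat.sSup_mem (s := {k | ∃ X : Finset V, IsTwinFreeClique G X ∧ X.card = k})
    ⟨0, ∅, isTwinFreeClique_empty, rfl⟩ (bddAbove_twinFreeClique_cards G)

lemma twinFreeCliqueNum_le_card (G : SimpleGraph V) : twinFreeCliqueNum G ≤ Fintype.card V := by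
  obtain ⟨X, -, hX⟩ := exists_isTwinFreeClique_card_eq G
  exact hX ▸ X.card_le_univ

lemma IsStrongResolvingSet.strongDim_le_card {S : Finset V} (hS : IsStrongResolvingSet G ↑S) :
    strongDim G ≤ S.card :=
  Nat.sInf_le (s := {k | ∃ S : Finset V, IsStrongResolvingSet G ↑S ∧ S.card = k}) ⟨S, hS, rfl⟩

lemma exists_isStrongResolvingSet_card_eq (G : SimpleGraph V) :
    ∃ S : Finset V, IsStrongResolvingSet G ↑S ∧ S.card = strongDim G :=
  Nat.sInf_mem (s := {k | ∃ S : Finset V, IsStrongResolvingSet G ↑S ∧ S.card = k})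
    ⟨_, Finset.univ, fun u v _ => ⟨u, by simp, stronglyResolves_self_left u v⟩, rfl⟩

lemma strongDim_le_card_sub_twinFreeCliqueNum (hG : G.Connected) :
    strongDim G ≤ Fintype.card V - twinFreeCliqueNum G := by
  classical
  obtain ⟨X, hX, hcard⟩ := exists_isTwinFreeClique_card_eq G
  calc strongDim G ≤ Xᶜ.card := (hX.isStrongResolvingSet_compl hG).strongDim_le_card
    _ = Fintype.card V - twinFreeCliqueNum G := by rw [Finset.card_compl, hcard]

lemma strongDim_eq_card_sub_twinFreeCliqueNum (hG : G.Connected)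
    (hdiam : ∀ x y, G.dist x y ≤ 2) :
    strongDim G = Fintype.card V - twinFreeCliqueNum G := by
  classical
  obtain ⟨S, hS, hcard⟩ := exists_isStrongResolvingSet_card_eq G
  have := (hS.isTwinFreeClique_compl hG hdiam).card_le_twinFreeCliqueNum
  rw [Finset.card_compl] at this
  have := S.card_le_univ
  have := strongDim_le_card_sub_twinFreeCliqueNum hG
  omega

end Card

lemma SimpleGraph.IsUniversal.maxDegree_eq [Fintype V] [DecidableRel G.Adj]
    (h : G.IsUniversal v) : G.maxDegree = Fintype.card V - 1 := by
  have : Nonempty V := ⟨v⟩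
  have := G.degree_le_maxDegree v
  have := G.maxDegree_lt_card_verts
  rw [(G.degree_eq_card_sub_one v).mpr h] at *
  omega

end General

section Join

variable {V W : Type*} {G : SimpleGraph V} {H : SimpleGraph W}

@[simp]
lemma joinGraph_adj_inl_inl {a b : V} : (joinGraph G H).Adj (.inl a) (.inl b) ↔ G.Adj a b :=
  Iff.rfl

@[simp]
lemma joinGraph_adj_inr_inr {a b : W} : (joinGraph G H).Adj (.inr a) (.inr b) ↔ H.Adj a b :=
  Iff.rfl

@[simp]
lemma joinGraph_adj_inl_inr (a : V) (b : W) : (joinGraph G H).Adj (.inl a) (.inr b) :=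
  trivial

@[simp]
lemma joinGraph_adj_inr_inl (a : W) (b : V) : (joinGraph G H).Adj (.inr a) (.inl b) :=
  trivial

lemma joinGraph_exists_walk_length_le_two [Nonempty V] [Nonempty W] (x y : V ⊕ W) :
    ∃ p : (joinGraph G H).Walk x y, p.length ≤ 2 := by
  obtain ⟨a₀⟩ := ‹Nonempty V›
  obtain ⟨b₀⟩ := ‹Nonempty W›
  rcases x with a | a <;> rcases y with b | b
  · exact ⟨.cons (joinGraph_adj_inl_inr a b₀) (.cons (joinGraph_adj_inr_inl b₀ b) .nil), by simp⟩
  · exact ⟨.cons (joinGraph_adj_inl_inr a b) .nil, by simp⟩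
  · exact ⟨.cons (joinGraph_adj_inr_inl a b) .nil, by simp⟩
  · exact ⟨.cons (joinGraph_adj_inr_inl a a₀) (.cons (joinGraph_adj_inl_inr a₀ b) .nil), by simp⟩

lemma joinGraph_connected [Nonempty V] [Nonempty W] : (joinGraph G H).Connected :=
  { preconnected := fun x y => (joinGraph_exists_walk_length_le_two x y).choose.reachable }

lemma joinGraph_dist_le_two [Nonempty V] [Nonempty W] (x y : V ⊕ W) :
    (joinGraph G H).dist x y ≤ 2 := by
  obtain ⟨p, hp⟩ := joinGraph_exists_walk_length_le_two (G := G) (H := H) x y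
  exact (dist_le p).trans hp

lemma closedNbhd_joinGraph_inl_eq_iff {u v : V} :
    closedNbhd (joinGraph G H) (.inl u) = closedNbhd (joinGraph G H) (.inl v) ↔
      closedNbhd G u = closedNbhd G v := by
  simp [Set.ext_iff]

lemma closedNbhd_joinGraph_inr_eq_iff {u v : W} :
    closedNbhd (joinGraph G H) (.inr u) = closedNbhd (joinGraph G H) (.inr v) ↔
      closedNbhd H u = closedNbhd H v := by
  simp [Set.ext_iff]

lemma isUniversal_of_closedNbhd_joinGraph_inl_eq_inr {u : V} {v : W}
    (h : closedNbhd (joinGraph G H) (.inl u) = closedNbhd (joinGraph G H) (.inr v)) :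
    G.IsUniversal u ∧ H.IsUniversal v := by
  constructor
  · intro w hw
    have : Sum.inl w ∈ closedNbhd (joinGraph G H) (.inl u) := h ▸ by simp
    simpa [Ne.symm hw] using this
  · intro w hw
    have : Sum.inr w ∈ closedNbhd (joinGraph G H) (.inr v) := h ▸ by simp
    simpa [Ne.symm hw] using this

lemma IsTwinFreeClique.toLeft {Z : Finset (V ⊕ W)} (hZ : IsTwinFreeClique (joinGraph G H) Z) :
    IsTwinFreeClique G Z.toLeft := by
  refine ⟨fun a ha b hb hab => ?_, fun a ha b hb hab hN => ?_⟩
  · exact hZ.1 (Finset.mem_toLeft.mp ha) (Finset.mem_toLeft.mp hb) (by simpa using hab)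
  · exact hZ.2 _ (Finset.mem_toLeft.mp ha) _ (Finset.mem_toLeft.mp hb) (by simpa using hab)
      (closedNbhd_joinGraph_inl_eq_iff.mpr hN)

lemma IsTwinFreeClique.toRight {Z : Finset (V ⊕ W)} (hZ : IsTwinFreeClique (joinGraph G H) Z) :
    IsTwinFreeClique H Z.toRight := by
  refine ⟨fun a ha b hb hab => ?_, fun a ha b hb hab hN => ?_⟩
  · exact hZ.1 (Finset.mem_toRight.mp ha) (Finset.mem_toRight.mp hb) (by simpa using hab)
  · exact hZ.2 _ (Finset.mem_toRight.mp ha) _ (Finset.mem_toRight.mp hb) (by simpa using hab)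
      (closedNbhd_joinGraph_inr_eq_iff.mpr hN)

lemma IsTwinFreeClique.disjSum
    (hcross : ∀ u v, closedNbhd (joinGraph G H) (.inl u) ≠ closedNbhd (joinGraph G H) (.inr v))
    {X : Finset V} {Y : Finset W} (hX : IsTwinFreeClique G X) (hY : IsTwinFreeClique H Y) :
    IsTwinFreeClique (joinGraph G H) (X.disjSum Y) := by
  constructor
  · rintro (a | a) ha (b | b) hb hab
    · exact hX.1 (by simpa using ha) (by simpa using hb) (by simpa using hab)
    · exact joinGraph_adj_inl_inr a b
    · exact joinGraph_adj_inr_inl a b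
    · exact hY.1 (by simpa using ha) (by simpa using hb) (by simpa using hab)
  · rintro (a | a) ha (b | b) hb hab hN
    · exact hX.2 a (by simpa using ha) b (by simpa using hb) (by simpa using hab)
        (closedNbhd_joinGraph_inl_eq_iff.mp hN)
    · exact hcross a b hN
    · exact hcross b a hN.symm
    · exact hY.2 a (by simpa using ha) b (by simpa using hb) (by simpa using hab)
        (closedNbhd_joinGraph_inr_eq_iff.mp hN)

lemma twinFreeCliqueNum_joinGraph [Fintype V] [Fintype W]
    (hcross : ∀ u v, closedNbhd (joinGraph G H) (.inl u) ≠ closedNbhd (joinGraph G H) (.inr v)) :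
    twinFreeCliqueNum (joinGraph G H) = twinFreeCliqueNum G + twinFreeCliqueNum H := by
  obtain ⟨Z, hZ, hZcard⟩ := exists_isTwinFreeClique_card_eq (joinGraph G H)
  obtain ⟨X, hX, hXcard⟩ := exists_isTwinFreeClique_card_eq G
  obtain ⟨Y, hY, hYcard⟩ := exists_isTwinFreeClique_card_eq H
  apply le_antisymm
  · rw [← hZcard, ← Finset.card_toLeft_add_card_toRight]
    exact add_le_add hZ.toLeft.card_le_twinFreeCliqueNum hZ.toRight.card_le_twinFreeCliqueNum
  · rw [← hXcard, ← hYcard, ← Finset.card_disjSum]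
    exact (hX.disjSum hcross hY).card_le_twinFreeCliqueNum

end Join

theorem strongDim_join_general {V W : Type*} [Fintype V] [Fintype W]
    (G : SimpleGraph V) (H : SimpleGraph W) [DecidableRel G.Adj] [DecidableRel H.Adj]
    (hG : G.Connected) (hH : H.Connected)
    (h : G.maxDegree ≠ Fintype.card V - 1 ∨ H.maxDegree ≠ Fintype.card W - 1) :
    strongDim (joinGraph G H) =
      Fintype.card V + Fintype.card W - twinFreeCliqueNum G - twinFreeCliqueNum H ∧
    strongDim G + strongDim H ≤ strongDim (joinGraph G H) := by
  have := hG.nonempty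
  have := hH.nonempty
  have hcross : ∀ u v,
      closedNbhd (joinGraph G H) (.inl u) ≠ closedNbhd (joinGraph G H) (.inr v) := by
    intro u v huv
    obtain ⟨hu, hv⟩ := isUniversal_of_closedNbhd_joinGraph_inl_eq_inr huv
    exact h.elim (· hu.maxDegree_eq) (· hv.maxDegree_eq)
  have hjoin := strongDim_eq_card_sub_twinFreeCliqueNum (G := joinGraph G H)
    joinGraph_connected joinGraph_dist_le_two
  rw [twinFreeCliqueNum_joinGraph hcross, Fintype.card_sum] at hjoin
  have := strongDim_le_card_sub_twinFreeCliqueNum hG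
  have := strongDim_le_card_sub_twinFreeCliqueNum hH
  have := twinFreeCliqueNum_le_card G
  have := twinFreeCliqueNum_le_card H
  omega

/-- If `G`, `H` are connected graphs of order `n₁, n₂ ≥ 2` with maximum
degrees `Δ₁ ≠ n₁ − 1` or `Δ₂ ≠ n₂ − 1`, then
`dim_s(G + H) = n₁ + n₂ − ϖ(G) − ϖ(H) ≥ dim_s(G) + dim_s(H)`. -/
theorem strongDim_join {V W : Type*} [Fintype V] [Fintype W]
    (G : SimpleGraph V) (H : SimpleGraph W) [DecidableRel G.Adj] [DecidableRel H.Adj]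
    (hG : G.Connected) (hH : H.Connected)
    (hn1 : 2 ≤ Fintype.card V) (hn2 : 2 ≤ Fintype.card W)
    (h : G.maxDegree ≠ Fintype.card V - 1 ∨ H.maxDegree ≠ Fintype.card W - 1) :
    strongDim (joinGraph G H) =
      Fintype.card V + Fintype.card W - twinFreeCliqueNum G - twinFreeCliqueNum H ∧
    strongDim G + strongDim H ≤ strongDim (joinGraph G H) :=
  strongDim_join_general G H hG hH h
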